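/- arXiv:1705.05786 — 2 statements merged into one kernel-verified Lean document; each statement's English description precedes it below -/
import Mathlib

section
/- Every infinite LSP word over a finite alphabet A is S_bLSP(A)-adic: there exist a sequence (f_n)_{n≥1} of bLSP morphisms of A* and a sequence of infinite words (w_n)_{n≥1} over A with w_1 = w and w_n = f_n(w_{n+1}) for all n ≥ 1. -/
/-- `u` is a prefix of the infinite word `w`. -/
def PrefI {A : Type*} (u : List A) (w : ℕ → A) : Prop :=
  ∀ i (h : i < u.length), u[i] = w i

/-- `u` is a factor of the infinite word `w`. -/
def FactorI {A : Type*} (w : ℕ → A) (u : List A) : Prop :=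
  ∃ k, ∀ i (h : i < u.length), u[i] = w (k + i)

/-- The infinite word `w` is LSP: every left special factor of `w` is a prefix of `w`. -/
def LSPInf {A : Type*} (w : ℕ → A) : Prop :=
  ∀ (u : List A) (a b : A), a ≠ b → FactorI w (a :: u) → FactorI w (b :: u) → PrefI u w

/-- `f` is a bLSP morphism (given by its action on letters). -/
def IsBLSP {A : Type*} (f : A → List A) : Prop :=
  ∃ α, f α = [α] ∧ ∀ β, β ≠ α → ∃ γ, f β = f γ ++ [β]

/-- `v` is the image of the infinite word `w` under the non-erasing morphism `f`,
i.e. every finite concatenation `f (w 0) ++ ⋯ ++ f (w (n-1))` is a prefix of `v`. -/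
def IsImage {A B : Type*} (f : A → List B) (w : ℕ → A) (v : ℕ → B) : Prop :=
  ∀ n, PrefI (((List.range n).map w).flatMap f) v

/-!
Let `α = w 0`. In an LSP word every letter `β ≠ α` has a unique left neighbour, since otherwise
`β` would be a left special factor that is not a prefix. Hence the block of `w` running back from
any occurrence of `β` to the nearest `α` depends only on `β`; these blocks form a bLSP morphism `f`.
As `A` is finite the blocks have bounded length, so `α` recurs with bounded gaps and `w = f(w')`,
where `w'` lists the letters just before the successive occurrences of `α`.

Every image `f β` is `α` followed by `α`-free letters and ends in `β`, so `f`-images parse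
uniquely. If `a u` and `b u` are factors of `w'`, then `a f(u) α` and `b f(u) α` are factors of `w`,
so `f(u) α` is a prefix of `w` and therefore `u` is a prefix of `w'`: the word `w'` is again LSP,
and the construction iterates.
-/

section

variable {A B : Type*}

theorem prefI_iff_map_range {u : List A} {w : ℕ → A} :
    PrefI u w ↔ (List.range u.length).map w = u := by
  refine ⟨fun h => List.ext_getElem (by simp) fun i h₁ h₂ => ?_, fun h i hi => ?_⟩
  · simp [h i h₂]
  · rw [← List.getElem_of_eq h (by simpa using hi)]
    simp

theorem PrefI.of_prefix {l m : List A} {w : ℕ → A} (hlm : l <+: m) (hm : PrefI m w) :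
    PrefI l w :=
  fun i hi => (hlm.getElem hi).trans (hm i _)

theorem PrefI.prefix_of_length_le {l m : List A} {w : ℕ → A} (hl : PrefI l w) (hm : PrefI m w)
    (hlen : l.length ≤ m.length) : l <+: m := by
  rw [prefI_iff_map_range] at hl hm
  rw [← hl, ← hm, ← Nat.add_sub_cancel' hlen, List.range_add, List.map_append]
  exact List.prefix_append _ _

theorem PrefI.append_get {l : List A} {w : ℕ → A} (hl : PrefI l w) :
    PrefI (l ++ [w l.length]) w := by
  rw [prefI_iff_map_range] at hl ⊢
  rw [List.length_append, List.length_singleton, List.range_succ, List.map_append, hl]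
  rfl

theorem factorI_iff_exists_prefI {w : ℕ → A} {u : List A} :
    FactorI w u ↔ ∃ p, PrefI (p ++ u) w := by
  have slice : ∀ k, (List.range (k + u.length)).map w =
      (List.range k).map w ++ (List.range u.length).map (fun i => w (k + i)) := fun k => by
    rw [List.range_add, List.map_append, List.map_map]; rfl
  have factor_iff : ∀ k, (∀ i (h : i < u.length), u[i] = w (k + i)) ↔
      (List.range u.length).map (fun i => w (k + i)) = u := fun k =>
    prefI_iff_map_range (w := fun i => w (k + i))
  simp only [FactorI, prefI_iff_map_range, List.length_append, factor_iff]
  constructor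
  · rintro ⟨k, hk⟩
    exact ⟨(List.range k).map w, by rw [List.length_map, List.length_range, slice, hk]⟩
  · rintro ⟨p, hp⟩
    rw [slice] at hp
    exact ⟨p.length, (List.append_inj hp (by simp)).2⟩

theorem IsImage.prefI_flatMap {f : A → List B} {w : ℕ → A} {v : ℕ → B} (h : IsImage f w v)
    {l : List A} (hl : PrefI l w) : PrefI (l.flatMap f) v := by
  rw [prefI_iff_map_range] at hl
  simpa [hl] using h l.length

theorem List.eq_and_prefix_of_append_cons_prefix {a : A} {r s t t' : List A} (hr : a ∉ r)
    (hs : a ∉ s) (h : r ++ a :: t <+: s ++ a :: t') : r = s ∧ t <+: t' := by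
  induction r generalizing s with
  | nil =>
    cases s with
    | nil => exact ⟨rfl, (List.cons_prefix_cons.1 h).2⟩
    | cons y s => exact absurd (List.cons_prefix_cons.1 h).1 (by simp_all)
  | cons x r ih =>
    cases s with
    | nil => exact absurd (List.cons_prefix_cons.1 h).1 (by simp_all)
    | cons y s =>
      rw [List.cons_append, List.cons_append, List.cons_prefix_cons] at h
      obtain ⟨rfl, htt'⟩ :=
        ih (List.not_mem_of_not_mem_cons hr) (List.not_mem_of_not_mem_cons hs) h.2
      exact ⟨by rw [h.1], htt'⟩

theorem List.length_le_length_flatMap {f : A → List B} (hf : ∀ x, f x ≠ []) (l : List A) :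
    l.length ≤ (l.flatMap f).length := by
  induction l with
  | nil => simp
  | cons x l ih =>
    have := List.length_pos_of_ne_nil (hf x)
    simp only [List.length_cons, List.flatMap_cons, List.length_append]
    omega

section BLSP

variable {f : A → List A} {α : A}

theorem exists_eq_cons_of_bLSP (hα : f α = [α]) (hf : ∀ β, β ≠ α → ∃ γ, f β = f γ ++ [β])
    (β : A) : ∃ r, f β = α :: r ∧ α ∉ r := by
  induction hn : (f β).length using Nat.strong_induction_on generalizing β with
  | _ n ih =>
    by_cases hβ : β = α
    · exact ⟨[], hβ ▸ hα, List.not_mem_nil⟩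
    obtain ⟨γ, hγ⟩ := hf β hβ
    obtain ⟨r, hr, hαr⟩ := ih _ (by simp [← hn, hγ]) γ rfl
    exact ⟨r ++ [β], by simp [hγ, hr], by simp [hαr, Ne.symm hβ]⟩

theorem exists_eq_append_singleton_of_bLSP (hα : f α = [α])
    (hf : ∀ β, β ≠ α → ∃ γ, f β = f γ ++ [β]) (β : A) : ∃ s, f β = s ++ [β] := by
  by_cases hβ : β = α
  · exact ⟨[], hβ ▸ hα⟩
  · obtain ⟨γ, hγ⟩ := hf β hβ
    exact ⟨f γ, hγ⟩

theorem injective_of_bLSP (hα : f α = [α]) (hf : ∀ β, β ≠ α → ∃ γ, f β = f γ ++ [β]) :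
    f.Injective := fun β β' h => by
  obtain ⟨s, hs⟩ := exists_eq_append_singleton_of_bLSP hα hf β
  obtain ⟨s', hs'⟩ := exists_eq_append_singleton_of_bLSP hα hf β'
  rw [hs, hs'] at h
  simpa using (List.append_inj' h rfl).2

theorem prefix_of_flatMap_append_prefix (hα : f α = [α])
    (hf : ∀ β, β ≠ α → ∃ γ, f β = f γ ++ [β]) {u U : List A}
    (h : u.flatMap f ++ [α] <+: U.flatMap f ++ [α]) : u <+: U := by
  have head : ∀ l : List A, ∃ t, l.flatMap f ++ [α] = α :: t := fun l => by
    cases l with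
    | nil => exact ⟨[], rfl⟩
    | cons x l =>
      obtain ⟨r, hr, -⟩ := exists_eq_cons_of_bLSP hα hf x
      exact ⟨r ++ (l.flatMap f ++ [α]), by simp [hr]⟩
  induction u generalizing U with
  | nil => exact List.nil_prefix
  | cons x u ih =>
    obtain ⟨r, hr, hαr⟩ := exists_eq_cons_of_bLSP hα hf x
    obtain ⟨t, ht⟩ := head u
    cases U with
    | nil =>
      have := h.length_le
      simp [hr] at this
    | cons y U =>
      obtain ⟨r', hr', hαr'⟩ := exists_eq_cons_of_bLSP hα hf y
      obtain ⟨t', ht'⟩ := head U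
      simp only [List.flatMap_cons, List.append_assoc, hr, hr', ht, ht', List.cons_append,
        List.cons_prefix_cons, true_and] at h
      obtain ⟨hrr', htt'⟩ := List.eq_and_prefix_of_append_cons_prefix hαr hαr' h
      have hxy : x = y := injective_of_bLSP hα hf (by rw [hr, hr', hrr'])
      subst hxy
      refine List.cons_prefix_cons.2 ⟨rfl, ih ?_⟩
      rw [ht, ht']
      exact List.cons_prefix_cons.2 ⟨rfl, htt'⟩

end BLSP

theorem LSPInf.of_isImage {f : A → List A} {w v : ℕ → A} (hv : LSPInf v) (hf : IsBLSP f)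
    (himg : IsImage f w v) : LSPInf w := by
  obtain ⟨α, hα, hfα⟩ := hf
  have lift : ∀ c u, FactorI w (c :: u) → FactorI v (c :: (u.flatMap f ++ [α])) := by
    intro c u hcu
    obtain ⟨p, hp⟩ := factorI_iff_exists_prefI.1 hcu
    obtain ⟨s, hs⟩ := exists_eq_append_singleton_of_bLSP hα hfα c
    have hnext := himg.prefI_flatMap hp.append_get
    generalize w _ = d at hnext
    obtain ⟨r, hr, -⟩ := exists_eq_cons_of_bLSP hα hfα d
    refine factorI_iff_exists_prefI.2 ⟨p.flatMap f ++ s, hnext.of_prefix ?_⟩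
    simp [hs, hr]
  intro u a b hab ha hb
  have hpre := hv _ a b hab (lift a u ha) (lift b u hb)
  set U := (List.range ((u.flatMap f).length + 1)).map w
  have hU : PrefI U w := prefI_iff_map_range.2 (by simp [U])
  have hlen : (u.flatMap f ++ [α]).length ≤ (U.flatMap f).length := by
    have := List.length_le_length_flatMap (f := f) (fun x => by
      obtain ⟨r, hr, -⟩ := exists_eq_cons_of_bLSP hα hfα x
      simp [hr]) U
    simpa [U] using this
  have := prefix_of_flatMap_append_prefix hα hfα
    ((hpre.prefix_of_length_le (himg.prefI_flatMap hU) hlen).trans (List.prefix_append _ _))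
  exact hU.of_prefix this

theorem LSPInf.eq_of_succ_eq {w : ℕ → A} (hw : LSPInf w) {i j : ℕ} (h : w (i + 1) = w (j + 1))
    (hne : w (i + 1) ≠ w 0) : w i = w j := by
  by_contra hij
  have factor : ∀ k, FactorI w [w k, w (k + 1)] := fun k => ⟨k, fun t ht =>
    match t, ht with
    | 0, _ => rfl
    | 1, _ => rfl⟩
  exact hne (hw [w (i + 1)] _ _ hij (factor i) (h ▸ factor j) 0 (by simp))

section HeadBlocks

variable (w : ℕ → A)

open scoped Classical in
noncomputable def headDist (i : ℕ) : ℕ := Nat.find (⟨i, by simp⟩ : ∃ t, w (i - t) = w 0)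

noncomputable def headBlock (i : ℕ) : List A :=
  (List.range (headDist w i + 1)).map fun t => w (i - headDist w i + t)

variable {w}

theorem headDist_le (i : ℕ) : headDist w i ≤ i := by
  classical
  exact Nat.find_min' _ (by simp)

theorem apply_sub_headDist (i : ℕ) : w (i - headDist w i) = w 0 := by
  classical
  exact Nat.find_spec (p := fun t => w (i - t) = w 0) _

theorem apply_sub_ne_of_lt_headDist {i t : ℕ} (ht : t < headDist w i) : w (i - t) ≠ w 0 := by
  classical
  exact Nat.find_min (p := fun t => w (i - t) = w 0) _ ht

theorem headDist_eq_iff {i t : ℕ} :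
    headDist w i = t ↔ w (i - t) = w 0 ∧ ∀ s < t, w (i - s) ≠ w 0 := by
  classical
  exact Nat.find_eq_iff (p := fun t => w (i - t) = w 0) _

theorem headDist_succ {i : ℕ} (h : w (i + 1) ≠ w 0) :
    headDist w (i + 1) = headDist w i + 1 := by
  refine headDist_eq_iff.2 ⟨by simpa using apply_sub_headDist i, fun s hs => ?_⟩
  cases s with
  | zero => exact h
  | succ s => simpa using apply_sub_ne_of_lt_headDist (Nat.lt_of_succ_lt_succ hs)

theorem headBlock_of_eq {i : ℕ} (h : w i = w 0) : headBlock w i = [w 0] := by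
  have : headDist w i = 0 := headDist_eq_iff.2 ⟨h, by simp⟩
  simp [headBlock, this, h]

theorem headBlock_succ {i : ℕ} (h : w (i + 1) ≠ w 0) :
    headBlock w (i + 1) = headBlock w i ++ [w (i + 1)] := by
  have hle := headDist_le (w := w) i
  rw [headBlock, headBlock, headDist_succ h, List.range_succ (n := headDist w i + 1),
    List.map_append, List.map_singleton,
    show i + 1 - (headDist w i + 1) = i - headDist w i by omega,
    show i - headDist w i + (headDist w i + 1) = i + 1 by omega]

theorem LSPInf.apply_sub_eq_of_eq (hw : LSPInf w) {i j : ℕ} (h : w i = w j) :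
    ∀ t, t ≤ headDist w i → t ≤ headDist w j → w (i - t) = w (j - t)
  | 0, _, _ => h
  | t + 1, hti, htj => by
    have hi := headDist_le (w := w) i
    have hj := headDist_le (w := w) j
    have := hw.apply_sub_eq_of_eq h t (by omega) (by omega)
    rw [show i - t = i - (t + 1) + 1 by omega, show j - t = j - (t + 1) + 1 by omega] at this
    refine hw.eq_of_succ_eq this ?_
    rw [show i - (t + 1) + 1 = i - t by omega]
    exact apply_sub_ne_of_lt_headDist (by omega)

theorem LSPInf.headDist_le_of_eq (hw : LSPInf w) {i j : ℕ} (h : w i = w j) :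
    headDist w i ≤ headDist w j := by
  by_contra! hlt
  exact apply_sub_ne_of_lt_headDist hlt <|
    (hw.apply_sub_eq_of_eq h _ hlt.le le_rfl).trans (apply_sub_headDist j)

theorem LSPInf.headBlock_eq_of_eq (hw : LSPInf w) {i j : ℕ} (h : w i = w j) :
    headBlock w i = headBlock w j := by
  have hd : headDist w i = headDist w j :=
    le_antisymm (hw.headDist_le_of_eq h) (hw.headDist_le_of_eq h.symm)
  have hi := headDist_le (w := w) i
  have hj := headDist_le (w := w) j
  simp only [headBlock, hd]
  refine List.map_congr_left fun t ht => ?_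
  rw [List.mem_range] at ht
  have := hw.apply_sub_eq_of_eq h (headDist w j - t) (by omega) (by omega)
  rwa [show i - (headDist w j - t) = i - headDist w j + t by omega,
    show j - (headDist w j - t) = j - headDist w j + t by omega] at this

end HeadBlocks

section HeadMorphism

variable (w : ℕ → A)

open scoped Classical in
/-- A letter `β` not occurring in `w` is sent to `[w 0, β] = f (w 0) ++ [β]`, keeping `f` bLSP. -/
noncomputable def headMorphism (β : A) : List A :=
  if h : ∃ i, w i = β then headBlock w h.choose else [w 0, β]

noncomputable def headPos : ℕ → ℕ := Nat.nth fun i => w i = w 0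

noncomputable def desubst (k : ℕ) : A := w (headPos w (k + 1) - 1)

variable {w}

theorem LSPInf.headMorphism_apply (hw : LSPInf w) (i : ℕ) :
    headMorphism w (w i) = headBlock w i := by
  have h : ∃ j, w j = w i := ⟨i, rfl⟩
  rw [headMorphism, dif_pos h]
  exact hw.headBlock_eq_of_eq h.choose_spec

theorem LSPInf.isBLSP_headMorphism (hw : LSPInf w) : IsBLSP (headMorphism w) := by
  refine ⟨w 0, by rw [hw.headMorphism_apply, headBlock_of_eq rfl], fun β hβ => ?_⟩
  by_cases hocc : ∃ i, w i = β
  · obtain ⟨_ | i, rfl⟩ := hocc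
    · exact absurd rfl hβ
    · exact ⟨w i, by rw [hw.headMorphism_apply, hw.headMorphism_apply, headBlock_succ hβ]⟩
  · refine ⟨w 0, ?_⟩
    rw [headMorphism, dif_neg hocc, hw.headMorphism_apply, headBlock_of_eq rfl]
    rfl

theorem LSPInf.infinite_setOf_apply_eq_head [Finite A] (hw : LSPInf w) :
    {i | w i = w 0}.Infinite := by
  obtain ⟨B, hB⟩ := (Set.finite_range fun β => (headMorphism w β).length).bddAbove
  refine Set.infinite_of_forall_exists_gt fun N => ⟨N + B - headDist w (N + B),
    apply_sub_headDist _, ?_⟩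
  have : headDist w (N + B) + 1 ≤ B := by
    simpa [hw.headMorphism_apply, headBlock] using hB ⟨w (N + B), rfl⟩
  omega

theorem headPos_zero : headPos w 0 = 0 := Nat.nth_zero_of_zero rfl

variable [Finite A]

theorem LSPInf.strictMono_headPos (hw : LSPInf w) : StrictMono (headPos w) :=
  Nat.nth_strictMono hw.infinite_setOf_apply_eq_head

theorem LSPInf.apply_headPos (hw : LSPInf w) (k : ℕ) : w (headPos w k) = w 0 :=
  Nat.nth_mem_of_infinite hw.infinite_setOf_apply_eq_head k

theorem LSPInf.apply_ne_of_lt_headPos (hw : LSPInf w) {k i : ℕ} (hk : headPos w k < i)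
    (hi : i < headPos w (k + 1)) : w i ≠ w 0 := fun h => by
  obtain ⟨n, -, rfl⟩ := Nat.exists_lt_card_nth_eq (p := fun i => w i = w 0) h
  have := (hw.strictMono_headPos.lt_iff_lt (a := k) (b := n)).1 hk
  have := (hw.strictMono_headPos.lt_iff_lt (a := n) (b := k + 1)).1 hi
  omega

theorem LSPInf.headMorphism_desubst (hw : LSPInf w) (k : ℕ) :
    headMorphism w (desubst w k) =
      (List.range (headPos w (k + 1) - headPos w k)).map fun t => w (headPos w k + t) := by
  have hlt := hw.strictMono_headPos k.lt_add_one
  have hd : headDist w (headPos w (k + 1) - 1) = headPos w (k + 1) - 1 - headPos w k :=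
    headDist_eq_iff.2 ⟨by rw [show _ - (_ - headPos w k) = headPos w k by omega,
      hw.apply_headPos],
      fun s hs => hw.apply_ne_of_lt_headPos (k := k) (by omega) (by omega)⟩
  rw [desubst, hw.headMorphism_apply, headBlock, hd,
    show headPos w (k + 1) - 1 - headPos w k + 1 = headPos w (k + 1) - headPos w k by omega,
    show headPos w (k + 1) - 1 - (headPos w (k + 1) - 1 - headPos w k) = headPos w k by omega]

theorem LSPInf.flatMap_desubst (hw : LSPInf w) (n : ℕ) :
    ((List.range n).map (desubst w)).flatMap (headMorphism w) =
      (List.range (headPos w n)).map w := by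
  induction n with
  | zero => simp [headPos_zero]
  | succ n ih =>
    have hle := (hw.strictMono_headPos n.lt_add_one).le
    rw [List.range_succ, List.map_append, List.flatMap_append, ih, List.map_singleton,
      List.flatMap_singleton, hw.headMorphism_desubst, ← Nat.add_sub_cancel' hle, List.range_add,
      List.map_append, List.map_map, Nat.add_sub_cancel' hle]
    rfl

theorem LSPInf.isImage_desubst (hw : LSPInf w) : IsImage (headMorphism w) (desubst w) w :=
  fun n => prefI_iff_map_range.2 (by rw [hw.flatMap_desubst, List.length_map, List.length_range])

end HeadMorphism

end

theorem lsp_is_bLSP_adic {A : Type*} [Fintype A] (w : ℕ → A) (hw : LSPInf w) :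
    ∃ (f : ℕ → A → List A) (W : ℕ → ℕ → A),
      (∀ n, IsBLSP (f n)) ∧ W 0 = w ∧ ∀ n, IsImage (f n) (W (n + 1)) (W n) := by
  let next (v : {v : ℕ → A // LSPInf v}) : {v : ℕ → A // LSPInf v} :=
    ⟨desubst v.1, v.2.of_isImage v.2.isBLSP_headMorphism v.2.isImage_desubst⟩
  let W (n : ℕ) : {v : ℕ → A // LSPInf v} := next^[n] ⟨w, hw⟩
  refine ⟨fun n => headMorphism (W n).1, fun n => (W n).1, fun n => (W n).2.isBLSP_headMorphism,
    rfl, fun n => ?_⟩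
  change IsImage _ (W (n + 1)).1 _
  rw [show W (n + 1) = next (W n) from Function.iterate_succ_apply' next n _]
  exact (W n).2.isImage_desubst
end

section
/- Let w be an infinite LSP word over a finite alphabet A and let f be a bLSP morphism of A*. The following assertions are equivalent: (1) f(w) is not LSP; (2) there exist pairwise distinct letters a, b, c such that w is (a, b, c)-fragile and the longest common prefix of f(b) and f(c) is strictly longer than the longest common prefix of f(a) and f(b); (3) there exist pairwise distinct letters a, b, c such that w is (a, b, c)-fragile and f is LSP (a, b, c)-breaking. -/
/-- `u` is an `(a, b, c, β, γ)`-fragility of `w`: `ua` is a prefix of `w` while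
`βub` and `γuc` are factors of `w`. -/
def FragilityAt {A : Type*} (w : ℕ → A) (u : List A) (a b c β γ : A) : Prop :=
  PrefI (u ++ [a]) w ∧ FactorI w (β :: (u ++ [b])) ∧ FactorI w (γ :: (u ++ [c]))

/-- `w` is `(a, b, c)`-fragile. -/
def Fragile {A : Type*} (w : ℕ → A) (a b c : A) : Prop :=
  ∃ β γ, β ≠ γ ∧ ∃ u, FragilityAt w u a b c β γ

/-- `f` is LSP `(a, b, c)`-breaking: the image of every `(a, b, c)`-fragile
infinite LSP word under `f` is not LSP. -/
def Breaking {A : Type*} (f : A → List A) (a b c : A) : Prop :=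
  ∀ w : ℕ → A, LSPInf w → Fragile w a b c → ∀ v, IsImage f w v → ¬ LSPInf v

/-- The longest common prefix of two words. -/
def lcp {A : Type*} [DecidableEq A] : List A → List A → List A
  | [], _ => []
  | _ :: _, [] => []
  | a :: u, b :: v => if a = b then a :: lcp u v else []

/-!
In `f(w)` the letter `α` occurs exactly at the starts of the blocks `f(w n)`, and every nonempty
prefix of an image `f b` is the image of its last letter; hence an occurrence of `f(y) α` in
`f(w)` desubstitutes to an occurrence of `y` in `w`.

If `u` is an `(a, b, c, β, γ)`-fragility and `p := lcp (f b) (f c)` is longer than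
`lcp (f a) (f b)`, then `f(u) p` is left special in `f(w)`, extended by `β` and `γ` (the last
letters of `f β` and `f γ`), but it is not a prefix, since `f(w)` continues `f(u)` with `f(a) α`.

Conversely, let `x e` be a shortest left special factor of `f(w)` that is not a prefix. It is not
a single letter, because the letter preceding `e ≠ α` in `f(w)` is determined by `f e`. So `x`
is a nonempty prefix `f(y) s` with `s` a prefix of some `f a`, and desubstituting the two
occurrences of `x e` yields a fragility `y` of `w` towards letters `b`, `c`. The LSP property of
`w` forces `b ≠ c`, and then the letter `e`, which follows `s` both in `f b` and in `f c` but not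
in `f a α`, gives `|lcp (f a) (f b)| ≤ |s| < |lcp (f b) (f c)|`.
-/

def OccursAt {A : Type*} (w : ℕ → A) (u : List A) (k : ℕ) : Prop :=
  ∀ i (h : i < u.length), u[i] = w (k + i)

section Occurrences

variable {A : Type*} {w : ℕ → A} {x y : List A} {a : A} {k : ℕ}

theorem occursAt_nil : OccursAt w [] k := fun _ h => absurd h (Nat.not_lt_zero _)

theorem occursAt_append :
    OccursAt w (x ++ y) k ↔ OccursAt w x k ∧ OccursAt w y (k + x.length) := by
  constructor
  · intro h
    refine ⟨fun i hi => ?_, fun i hi => ?_⟩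
    · rw [← h i (by simp; omega), List.getElem_append_left hi]
    · rw [Nat.add_assoc, ← h (x.length + i) (by simp; omega),
        List.getElem_append_right (by omega)]
      simp
  · rintro ⟨hx, hy⟩ i hi
    rw [List.getElem_append]
    split_ifs with h
    · exact hx i h
    · rw [hy _ (by simp at hi; omega)]
      congr 1
      omega

theorem occursAt_singleton : OccursAt w [a] k ↔ w k = a := by
  simp [OccursAt, eq_comm]

theorem occursAt_cons : OccursAt w (a :: x) k ↔ w k = a ∧ OccursAt w x (k + 1) := by
  rw [← List.singleton_append, occursAt_append, occursAt_singleton, List.length_singleton]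

theorem prefI_iff_occursAt : PrefI x w ↔ OccursAt w x 0 := by
  simp [PrefI, OccursAt]

theorem OccursAt.of_prefix (h : OccursAt w y k) (hxy : x <+: y) : OccursAt w x k := by
  obtain ⟨t, rfl⟩ := hxy
  exact (occursAt_append.1 h).1

theorem FactorI.of_prefix (h : FactorI w y) (hxy : x <+: y) : FactorI w x :=
  let ⟨k, hk⟩ := h
  ⟨k, OccursAt.of_prefix hk hxy⟩

theorem OccursAt.prefix_of_length_le (hx : OccursAt w x k) (hy : OccursAt w y k)
    (hle : x.length ≤ y.length) : x <+: y := by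
  rw [List.prefix_iff_eq_take]
  refine List.ext_getElem (by simpa using hle) fun i h₁ h₂ => ?_
  rw [List.getElem_take, hx, hy]

theorem OccursAt.prefix_or_prefix (hx : OccursAt w x k) (hy : OccursAt w y k) :
    x <+: y ∨ y <+: x :=
  (le_total x.length y.length).imp (hx.prefix_of_length_le hy) (hy.prefix_of_length_le hx)

theorem lspInf_of_forall_extend
    (H : ∀ u e d d', d ≠ d' → FactorI w (d :: (u ++ [e])) → FactorI w (d' :: (u ++ [e])) →
      PrefI u w → w u.length = e) : LSPInf w := by
  intro u d d' hdd'
  induction u using List.reverseRecOn with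
  | nil => exact fun _ _ => prefI_iff_occursAt.2 occursAt_nil
  | append_singleton u e ih =>
    intro h h'
    have hu : PrefI u w :=
      ih (h.of_prefix (by simp)) (h'.of_prefix (by simp))
    rw [prefI_iff_occursAt, occursAt_append, occursAt_singleton, Nat.zero_add]
    exact ⟨prefI_iff_occursAt.1 hu, H u e d d' hdd' h h' hu⟩

end Occurrences

section LongestCommonPrefix

variable {A : Type*} [DecidableEq A] {x u v : List A}

theorem prefix_lcp_iff : x <+: lcp u v ↔ x <+: u ∧ x <+: v := by
  induction u generalizing x v with
  | nil => simp +contextual [lcp]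
  | cons a u ih =>
    cases v with
    | nil => simp +contextual [lcp]
    | cons b v =>
      cases x with
      | nil => simp
      | cons c x =>
        by_cases hab : a = b
        · subst hab
          simp only [lcp, if_true, List.cons_prefix_cons, ih]
          tauto
        · simp only [lcp, hab, if_false, List.cons_prefix_cons, List.prefix_nil, reduceCtorEq,
            false_iff, not_and]
          rintro ⟨rfl, -⟩ rfl
          exact absurd rfl hab

theorem lcp_prefix_left : lcp u v <+: u := (prefix_lcp_iff.1 (List.prefix_refl _)).1

theorem lcp_prefix_right : lcp u v <+: v := (prefix_lcp_iff.1 (List.prefix_refl _)).2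

theorem length_le_length_lcp_of_prefix (hu : x <+: u) (hv : x <+: v) :
    x.length ≤ (lcp u v).length :=
  (prefix_lcp_iff.2 ⟨hu, hv⟩).length_le

end LongestCommonPrefix

def IsBLSPAt {A : Type*} (f : A → List A) (α : A) : Prop :=
  f α = [α] ∧ ∀ β, β ≠ α → ∃ γ, f β = f γ ++ [β]

namespace IsBLSPAt

variable {A : Type*} {f : A → List A} {α : A} {x : List A} {b c e : A}

theorem exists_eq_append (hf : IsBLSPAt f α) (b : A) : ∃ x, f b = x ++ [b] := by
  by_cases hb : b = α
  · exact ⟨[], by rw [hb, hf.1, List.nil_append]⟩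
  · obtain ⟨γ, hγ⟩ := hf.2 b hb
    exact ⟨f γ, hγ⟩

theorem ne_nil (hf : IsBLSPAt f α) (b : A) : f b ≠ [] := by
  obtain ⟨x, hx⟩ := hf.exists_eq_append b
  simp [hx]

theorem injective (hf : IsBLSPAt f α) : Function.Injective f := by
  intro b c h
  obtain ⟨x, hx⟩ := hf.exists_eq_append b
  obtain ⟨y, hy⟩ := hf.exists_eq_append c
  rw [hx, hy] at h
  simpa using List.append_inj_right' h rfl

theorem eq_of_prefix (hf : IsBLSPAt f α) (h : x ++ [e] <+: f b) : f e = x ++ [e] := by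
  induction hn : (f b).length using Nat.strong_induction_on generalizing b with
  | _ n ih =>
  by_cases hb : b = α
  · subst hb
    rw [hf.1] at h
    obtain ⟨rfl, rfl⟩ : x = [] ∧ e = b := by
      have hx : x = [] := by simpa using h.length_le
      subst hx
      simpa using h
    exact hf.1
  · obtain ⟨γ, hγ⟩ := hf.2 b hb
    rw [hγ, List.prefix_concat_iff] at h
    rcases h with h | h
    · obtain ⟨rfl, he⟩ := List.append_inj h (by simpa using congrArg List.length h)
      rw [List.singleton_inj.1 he, hγ]
    · exact ih _ (by rw [← hn, hγ, List.length_append]; simp) h rfl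

theorem eq_nil_of_append_alpha_prefix (hf : IsBLSPAt f α) (h : x ++ [α] <+: f b) : x = [] := by
  have := congrArg List.length (hf.eq_of_prefix h)
  rw [hf.1] at this
  simpa using this

theorem not_append_alpha_prefix (hf : IsBLSPAt f α) : ¬ f b ++ [α] <+: f c :=
  fun h => hf.ne_nil b (hf.eq_nil_of_append_alpha_prefix h)

theorem exists_eq_cons (hf : IsBLSPAt f α) (b : A) : ∃ r, f b = α :: r := by
  obtain ⟨e, r, hr⟩ := List.exists_cons_of_ne_nil (hf.ne_nil b)
  have hfe : f e = [e] := hf.eq_of_prefix (x := []) (b := b) (by simp [hr])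
  obtain rfl : e = α := by
    by_contra he
    obtain ⟨γ, hγ⟩ := hf.2 e he
    exact hf.ne_nil γ (by simpa [hfe] using hγ)
  exact ⟨r, hr⟩

theorem exists_flatMap_append_alpha_eq_cons (hf : IsBLSPAt f α) :
    ∀ y : List A, ∃ r, y.flatMap f ++ [α] = α :: r
  | [] => ⟨[], rfl⟩
  | b :: _ => by
    obtain ⟨r, hr⟩ := hf.exists_eq_cons b
    exact ⟨_, by rw [List.flatMap_cons, hr, List.cons_append, List.cons_append]⟩

theorem eq_of_prefix_append_alpha (hf : IsBLSPAt f α) (h : f b ++ [α] <+: f c ++ [α]) :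
    b = c := by
  rcases List.prefix_concat_iff.1 h with h | h
  · exact hf.injective (List.append_inj_left' h rfl)
  · exact absurd h hf.not_append_alpha_prefix

variable [DecidableEq A] {p s : List A} {a : A}

theorem length_le_length_lcp (hf : IsBLSPAt f α) (hp : p <+: f b)
    (hpa : p <+: f a ++ [α] ∨ f a ++ [α] <+: p) : p.length ≤ (lcp (f a) (f b)).length := by
  rcases hpa with h | h
  · rcases List.prefix_concat_iff.1 h with rfl | h
    · exact absurd hp hf.not_append_alpha_prefix
    · exact length_le_length_lcp_of_prefix h hp
  · exact absurd (h.trans hp) hf.not_append_alpha_prefix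

theorem length_lcp_lt (hf : IsBLSPAt f α) (hb : s ++ [e] <+: f b ++ [α])
    (hc : s ++ [e] <+: f c ++ [α]) (hbc : b ≠ c) (ha : ¬ s ++ [e] <+: f a) :
    (lcp (f a) (f b)).length < (lcp (f b) (f c)).length := by
  have hsb : s ++ [e] <+: f b := by
    refine (List.prefix_concat_iff.1 hb).resolve_left fun h => hbc ?_
    exact hf.eq_of_prefix_append_alpha (h ▸ hc)
  have hsc : s ++ [e] <+: f c := by
    refine (List.prefix_concat_iff.1 hc).resolve_left fun h => hbc ?_
    exact (hf.eq_of_prefix_append_alpha (h ▸ hb)).symm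
  calc (lcp (f a) (f b)).length < (s ++ [e]).length := by
        refine lt_of_not_ge fun hle => ha ?_
        exact (List.prefix_of_prefix_length_le hsb lcp_prefix_right hle).trans lcp_prefix_left
    _ ≤ (lcp (f b) (f c)).length := length_le_length_lcp_of_prefix hsb hsc

end IsBLSPAt

def blockStart {A : Type*} (f : A → List A) (w : ℕ → A) (n : ℕ) : ℕ :=
  (((List.range n).map w).flatMap f).length

section Image

variable {A : Type*} {f : A → List A} {w v : ℕ → A} {y u : List A} {a b : A} {n : ℕ}

theorem map_range_add_of_occursAt (hy : OccursAt w y n) :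
    (List.range (n + y.length)).map w = (List.range n).map w ++ y := by
  rw [List.range_add, List.map_append, List.map_map]
  congr 1
  exact List.ext_getElem (by simp) fun i _ h => by simp [hy i h]

theorem blockStart_zero : blockStart f w 0 = 0 := rfl

theorem blockStart_add_length (hy : OccursAt w y n) :
    blockStart f w (n + y.length) = blockStart f w n + (y.flatMap f).length := by
  simp [blockStart, map_range_add_of_occursAt hy]

theorem blockStart_succ : blockStart f w (n + 1) = blockStart f w n + (f (w n)).length := by
  simpa using blockStart_add_length (f := f) (occursAt_singleton.2 rfl : OccursAt w [w n] n)

theorem IsImage.occursAt_flatMap (hv : IsImage f w v) (hy : OccursAt w y n) :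
    OccursAt v (y.flatMap f) (blockStart f w n) := by
  have h := prefI_iff_occursAt.1 (hv (n + y.length))
  rw [map_range_add_of_occursAt hy, List.flatMap_append, occursAt_append, Nat.zero_add] at h
  exact h.2

theorem IsImage.occursAt_block (hv : IsImage f w v) (n : ℕ) :
    OccursAt v (f (w n)) (blockStart f w n) := by
  simpa using hv.occursAt_flatMap (occursAt_singleton.2 rfl : OccursAt w [w n] n)

variable {α : A}

theorem le_blockStart (hf : IsBLSPAt f α) (n : ℕ) : n ≤ blockStart f w n := by
  induction n with
  | zero => exact le_rfl
  | succ n ih =>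
    have := List.length_pos_iff.2 (hf.ne_nil (w n))
    rw [blockStart_succ]
    omega

theorem exists_blockStart_add (hf : IsBLSPAt f α) (i : ℕ) :
    ∃ n t, i = blockStart f w n + t ∧ t < (f (w n)).length := by
  induction i with
  | zero => exact ⟨0, 0, rfl, List.length_pos_iff.2 (hf.ne_nil _)⟩
  | succ i ih =>
    obtain ⟨n, t, rfl, ht⟩ := ih
    by_cases h : t + 1 < (f (w n)).length
    · exact ⟨n, t + 1, rfl, h⟩
    · refine ⟨n + 1, 0, ?_, List.length_pos_iff.2 (hf.ne_nil _)⟩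
      rw [blockStart_succ]
      omega

theorem exists_isImage (hf : IsBLSPAt f α) (w : ℕ → A) : ∃ v, IsImage f w v := by
  have hmono : ∀ p q, p ≤ q →
      ((List.range p).map w).flatMap f <+: ((List.range q).map w).flatMap f := by
    intro p q hpq
    obtain ⟨d, rfl⟩ := Nat.exists_eq_add_of_le hpq
    rw [List.range_add, List.map_append, List.flatMap_append]
    exact List.prefix_append _ _
  have hlen (i : ℕ) : i < (((List.range (i + 1)).map w).flatMap f).length :=
    Nat.lt_of_lt_of_le (Nat.lt_succ_self i) (le_blockStart hf (i + 1))
  refine ⟨fun i => (((List.range (i + 1)).map w).flatMap f)[i]'(hlen i), fun n i hi => ?_⟩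
  rcases le_total n (i + 1) with h | h
  · exact (hmono n (i + 1) h).getElem hi
  · exact ((hmono (i + 1) n h).getElem (hlen i)).symm

variable (hf : IsBLSPAt f α) (hv : IsImage f w v)
include hf hv

theorem IsImage.apply_blockStart (n : ℕ) : v (blockStart f w n) = α := by
  obtain ⟨r, hr⟩ := hf.exists_eq_cons (w n)
  have h := hv.occursAt_block n
  rw [hr, occursAt_cons] at h
  exact h.1

theorem IsImage.occursAt_block_append_alpha (n : ℕ) :
    OccursAt v (f (w n) ++ [α]) (blockStart f w n) := by
  refine occursAt_append.2 ⟨hv.occursAt_block n, occursAt_singleton.2 ?_⟩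
  rw [← blockStart_succ]
  exact hv.apply_blockStart hf (n + 1)

theorem IsImage.apply_blockStart_succ_sub_one (n : ℕ) :
    v (blockStart f w (n + 1) - 1) = w n := by
  obtain ⟨x, hx⟩ := hf.exists_eq_append (w n)
  have h := hv.occursAt_block n
  rw [hx, occursAt_append, occursAt_singleton] at h
  rw [blockStart_succ, hx, ← h.2, List.length_append, List.length_singleton]
  congr 1

theorem IsImage.exists_blockStart_eq {i : ℕ} (hi : v i = α) : ∃ n, blockStart f w n = i := by
  obtain ⟨n, t, rfl, ht⟩ := exists_blockStart_add (w := w) hf i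
  refine ⟨n, ?_⟩
  suffices (f (w n)).take t = [] by simp_all [List.take_eq_nil_iff, hf.ne_nil]
  refine hf.eq_nil_of_append_alpha_prefix (b := w n) ?_
  rw [← hi, ← hv.occursAt_block n t ht, ← List.take_succ_eq_append_getElem]
  exact List.take_prefix _ _

theorem IsImage.apply_eq_append {i : ℕ} (hi : v (i + 1) ≠ α) :
    f (v (i + 1)) = f (v i) ++ [v (i + 1)] := by
  obtain ⟨n, t, hnt, ht⟩ := exists_blockStart_add (w := w) hf (i + 1)
  obtain ⟨t, rfl⟩ : ∃ t', t = t' + 1 := Nat.exists_eq_succ_of_ne_zero fun h => hi (by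
    rw [hnt, h, Nat.add_zero]; exact hv.apply_blockStart hf n)
  have hvi : v i = (f (w n))[t] := by rw [hv.occursAt_block n t (by omega)]; congr 1; omega
  have hvi' : v (i + 1) = (f (w n))[t + 1] := by rw [hv.occursAt_block n (t + 1) ht, hnt]
  have hpre (j : ℕ) (hj : j < (f (w n)).length) :
      f ((f (w n))[j]) = (f (w n)).take (j + 1) := by
    have h := List.take_prefix (j + 1) (f (w n))
    rw [List.take_succ_eq_append_getElem hj] at h ⊢
    exact hf.eq_of_prefix h
  rw [hvi, hvi', hpre _ ht, hpre _ (by omega), List.take_succ_eq_append_getElem ht]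

theorem IsImage.eq_of_factorI_pair {d d' e : A} (he : e ≠ α) (h : FactorI v [d, e])
    (h' : FactorI v [d', e]) : d = d' := by
  have key {d : A} (h : FactorI v [d, e]) : f e = f d ++ [e] := by
    obtain ⟨k, hk : OccursAt v [d, e] k⟩ := h
    rw [occursAt_cons, occursAt_singleton] at hk
    rw [← hk.1, ← hk.2]
    exact hv.apply_eq_append hf (hk.2 ▸ he)
  exact hf.injective (List.append_inj_left' ((key h).symm.trans (key h')) rfl)

theorem IsImage.occursAt_of_occursAt_flatMap_append_alpha :
    ∀ {y : List A} {n : ℕ},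
      OccursAt v (y.flatMap f ++ [α]) (blockStart f w n) → OccursAt w y n
  | [], _, _ => occursAt_nil
  | b :: y, n, h => by
    rw [List.flatMap_cons, List.append_assoc, occursAt_append] at h
    obtain ⟨r, hr⟩ := hf.exists_flatMap_append_alpha_eq_cons y
    have hb : OccursAt v (f b ++ [α]) (blockStart f w n) := by
      rw [hr, occursAt_cons] at h
      exact occursAt_append.2 ⟨h.1, occursAt_singleton.2 h.2.1⟩
    obtain rfl : b = w n := by
      rcases hb.prefix_or_prefix (hv.occursAt_block_append_alpha hf n) with h | h
      · exact hf.eq_of_prefix_append_alpha h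
      · exact (hf.eq_of_prefix_append_alpha h).symm
    rw [← blockStart_succ] at h
    exact occursAt_cons.2 ⟨rfl, IsImage.occursAt_of_occursAt_flatMap_append_alpha h.2⟩

theorem IsImage.prefI_flatMap_append_alpha (h : PrefI (y ++ [a]) w) :
    PrefI (y.flatMap f ++ (f a ++ [α])) v := by
  rw [prefI_iff_occursAt, occursAt_append, occursAt_singleton, Nat.zero_add] at h
  obtain ⟨hy, rfl⟩ := h
  have hlen := blockStart_add_length (f := f) hy
  rw [Nat.zero_add, blockStart_zero, Nat.zero_add] at hlen
  rw [prefI_iff_occursAt, occursAt_append, Nat.zero_add, ← hlen]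
  exact ⟨hv.occursAt_flatMap hy, hv.occursAt_block_append_alpha hf _⟩

theorem IsImage.factorI_cons_flatMap (h : FactorI w (b :: y)) :
    FactorI v (b :: y.flatMap f) := by
  obtain ⟨k, hk⟩ := h
  obtain ⟨x, hx⟩ := hf.exists_eq_append b
  have h := hv.occursAt_flatMap hk
  rw [List.flatMap_cons, hx, List.append_assoc, occursAt_append] at h
  exact ⟨_, h.2⟩

theorem IsImage.exists_eq_flatMap_append (hu : PrefI u v) (hne : u ≠ []) :
    ∃ y a s, PrefI (y ++ [a]) w ∧ s ≠ [] ∧ s <+: f a ∧ u = y.flatMap f ++ s := by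
  obtain ⟨K, R, hKR, hR⟩ := exists_blockStart_add (w := w) hf (u.length - 1)
  refine ⟨(List.range K).map w, w K, (f (w K)).take (R + 1), ?_, by simp [hf.ne_nil],
    List.take_prefix _ _, ?_⟩
  · rw [show (List.range K).map w ++ [w K] = (List.range (K + 1)).map w by simp [List.range_succ]]
    exact fun i _ => by simp
  have hs : OccursAt v (((List.range K).map w).flatMap f ++ (f (w K)).take (R + 1)) 0 :=
    occursAt_append.2 ⟨prefI_iff_occursAt.1 (hv K), by
      rw [Nat.zero_add]
      exact (hv.occursAt_block K).of_prefix (List.take_prefix _ _)⟩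
  have hlen : u.length = blockStart f w K + (R + 1) := by
    have := List.length_pos_iff.2 hne
    omega
  refine ((prefI_iff_occursAt.1 hu).prefix_of_length_le hs ?_).eq_of_length ?_ <;>
    simp [hlen, blockStart, hR]

theorem IsImage.exists_factorI_of_occursAt {s : List A} {d e : A} {k : ℕ} (hs : s ≠ [])
    (hsa : s <+: f a) (h : OccursAt v (d :: (y.flatMap f ++ s ++ [e])) k) :
    ∃ b, FactorI w (d :: (y ++ [b])) ∧ s ++ [e] <+: f b ++ [α] := by
  obtain ⟨r, hr⟩ : ∃ r, s ++ [e] = α :: r := by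
    obtain ⟨r, hr⟩ := hf.exists_eq_cons a
    obtain ⟨s', rfl⟩ | ⟨t, rfl, -⟩ := List.prefix_cons_iff.1 (hr ▸ hsa)
    · exact absurd rfl hs
    · exact ⟨_, rfl⟩
  rw [occursAt_cons, List.append_assoc, occursAt_append] at h
  obtain ⟨hd, hy, hse⟩ := h
  have hyα : OccursAt v (y.flatMap f ++ [α]) (k + 1) := by
    refine (occursAt_append.2 ⟨hy, hse⟩).of_prefix ?_
    rw [hr]
    exact (List.prefix_append_right_inj _).2 (by simp)
  obtain ⟨m, hm⟩ := hv.exists_blockStart_eq hf (i := k + 1) (by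
    obtain ⟨r', hr'⟩ := hf.exists_flatMap_append_alpha_eq_cons y
    rw [hr', occursAt_cons] at hyα
    exact hyα.1)
  obtain ⟨m, rfl⟩ : ∃ m', m = m' + 1 :=
    Nat.exists_eq_succ_of_ne_zero (by rintro rfl; simp [blockStart_zero] at hm)
  have hwd : w m = d := by
    rw [← hd, ← hv.apply_blockStart_succ_sub_one hf, hm, Nat.add_sub_cancel]
  rw [← hm] at hyα hse
  have hwy := hv.occursAt_of_occursAt_flatMap_append_alpha hf hyα
  refine ⟨w (m + 1 + y.length), ⟨m, show OccursAt w _ m from ?_⟩, ?_⟩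
  · rw [occursAt_cons, occursAt_append, occursAt_singleton]
    exact ⟨hwd, hwy, rfl⟩
  · rw [← blockStart_add_length hwy] at hse
    rcases hse.prefix_or_prefix (hv.occursAt_block_append_alpha hf _) with h | h
    · exact h
    · rcases List.prefix_concat_iff.1 h with h | h
      · exact h ▸ List.prefix_refl _
      · exact absurd (h.trans hsa) hf.not_append_alpha_prefix

end Image

section Fragility

variable {A : Type*} [DecidableEq A] {f : A → List A} {α : A} {w v : ℕ → A} {a b c : A}

theorem IsImage.not_lspInf_of_fragilityAt (hf : IsBLSPAt f α) (hv : IsImage f w v)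
    {u : List A} {β γ : A} (hβγ : β ≠ γ) (hu : FragilityAt w u a b c β γ)
    (hlt : (lcp (f a) (f b)).length < (lcp (f b) (f c)).length) : ¬ LSPInf v := by
  intro hL
  obtain ⟨hua, hub, huc⟩ := hu
  have hext {δ d : A} (h : FactorI w (δ :: (u ++ [d]))) (hd : lcp (f b) (f c) <+: f d) :
      FactorI v (δ :: (u.flatMap f ++ lcp (f b) (f c))) := by
    refine (hv.factorI_cons_flatMap hf h).of_prefix ?_
    rw [List.flatMap_append, List.flatMap_singleton, List.cons_prefix_cons]
    exact ⟨rfl, (List.prefix_append_right_inj _).2 hd⟩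
  have hp := prefI_iff_occursAt.1 <|
    hL _ β γ hβγ (hext hub lcp_prefix_left) (hext huc lcp_prefix_right)
  have ha := prefI_iff_occursAt.1 (hv.prefI_flatMap_append_alpha hf hua)
  have hcmp := (hp.prefix_or_prefix ha).imp (List.prefix_append_right_inj _).1
    (List.prefix_append_right_inj _).1
  exact hlt.not_ge (hf.length_le_length_lcp lcp_prefix_left hcmp)

theorem breaking_of_length_lcp_lt (hf : IsBLSP f)
    (hlt : (lcp (f a) (f b)).length < (lcp (f b) (f c)).length) : Breaking f a b c := by
  rintro w - ⟨β, γ, hβγ, u, hu⟩ v hv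
  obtain ⟨α, hf⟩ := hf
  exact hv.not_lspInf_of_fragilityAt hf hβγ hu hlt

theorem IsImage.exists_fragile_of_not_lspInf (hf : IsBLSPAt f α) (hw : LSPInf w)
    (hv : IsImage f w v) (hnot : ¬ LSPInf v) :
    ∃ a b c : A, a ≠ b ∧ b ≠ c ∧ a ≠ c ∧ Fragile w a b c ∧
      (lcp (f a) (f b)).length < (lcp (f b) (f c)).length := by
  by_contra hcon
  refine hnot (lspInf_of_forall_extend fun u e d d' hdd' h h' hu => by_contra fun he => ?_)
  rcases eq_or_ne u [] with rfl | hne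
  · have he : e ≠ α := fun h => he (h ▸ hv.apply_blockStart hf 0)
    exact hdd' (hv.eq_of_factorI_pair hf he h h')
  obtain ⟨y, a, s, hya, hs, hsa, rfl⟩ := hv.exists_eq_flatMap_append hf hu hne
  obtain ⟨k, hk⟩ := h
  obtain ⟨k', hk'⟩ := h'
  obtain ⟨b, hb, hsb⟩ := hv.exists_factorI_of_occursAt hf hs hsa hk
  obtain ⟨c, hc, hsc⟩ := hv.exists_factorI_of_occursAt hf hs hsa hk'
  have hsa' : ¬ s ++ [e] <+: f a ++ [α] := by
    intro h
    have h := (prefI_iff_occursAt.1 (hv.prefI_flatMap_append_alpha hf hya)).of_prefix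
      ((List.prefix_append_right_inj (y.flatMap f)).2 h)
    rw [← List.append_assoc, occursAt_append, occursAt_singleton, Nat.zero_add] at h
    exact he h.2
  rcases eq_or_ne b c with rfl | hbc
  · have hab : a = b := by
      have h := hw _ d d' hdd' hb hc
      rw [prefI_iff_occursAt, occursAt_append, occursAt_singleton] at h hya
      exact hya.2.symm.trans h.2
    exact hsa' (hab ▸ hsb)
  refine hcon ⟨a, b, c, ?_, hbc, ?_, ⟨d, d', hdd', y, hya, hb, hc⟩,
    hf.length_lcp_lt hsb hsc hbc fun h => hsa' (h.trans (List.prefix_append _ _))⟩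
  · rintro rfl
    exact hsa' hsb
  · rintro rfl
    exact hsa' hsc

end Fragility

theorem fragility_breaking_tfae {A : Type*} [DecidableEq A] (w : ℕ → A)
    (hw : LSPInf w) (f : A → List A) (hf : IsBLSP f) :
    ((∀ v, IsImage f w v → ¬ LSPInf v) ↔
      ∃ a b c : A, a ≠ b ∧ b ≠ c ∧ a ≠ c ∧ Fragile w a b c ∧
        (lcp (f a) (f b)).length < (lcp (f b) (f c)).length) ∧
    ((∀ v, IsImage f w v → ¬ LSPInf v) ↔
      ∃ a b c : A, a ≠ b ∧ b ≠ c ∧ a ≠ c ∧ Fragile w a b c ∧ Breaking f a b c) := by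
  have hlcp : (∀ v, IsImage f w v → ¬ LSPInf v) →
      ∃ a b c : A, a ≠ b ∧ b ≠ c ∧ a ≠ c ∧ Fragile w a b c ∧
        (lcp (f a) (f b)).length < (lcp (f b) (f c)).length := by
    intro h
    obtain ⟨α, hα⟩ := hf
    obtain ⟨v, hv⟩ := exists_isImage hα w
    exact hv.exists_fragile_of_not_lspInf hα hw (h v hv)
  refine ⟨⟨hlcp, ?_⟩, ⟨fun h => ?_, ?_⟩⟩
  · rintro ⟨a, b, c, -, -, -, hfr, hlt⟩
    exact breaking_of_length_lcp_lt hf hlt w hw hfr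
  · obtain ⟨a, b, c, hab, hbc, hac, hfr, hlt⟩ := hlcp h
    exact ⟨a, b, c, hab, hbc, hac, hfr, breaking_of_length_lcp_lt hf hlt⟩
  · rintro ⟨a, b, c, -, -, -, hfr, hbr⟩
    exact hbr w hw hfr
end
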